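/- For all ξ₁, ξ₂ ∈ (-1, 0), the set of ω ∈ ℂ ∖ 𝒞 satisfying the saddle point equation 1 + ξ₁·ω/√(ω^2+2c) + ξ₂/(ω·√(ω^{-2}+2c)) = 0 has at most four elements. -/

import Mathlib

/-!
Put `s = √(ω²+2c)`, `t = √(ω⁻²+2c)`, `X = ξ₁ω/s` and `Y = ξ₂/(ωt)`, so that the saddle point
equation reads `1 + X + Y = 0`. With `ζ = -iω` and `r = √(2c)` the chosen branch is
`s = i·√(ζ+r)·√(ζ-r)` (principal roots); off the cut `i[-r, r]` the arguments of `ζ ± r` differ by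
less than `π`, which forces `Re(ω/s) > 0`. Applied to `ω` and to `1/ω` this gives `Re X < 0` and
`Re Y < 0`, so `X` lies in the strip `-1 < Re X < 0`.

Squaring away `s` and `t` shows that `X` is a root of a real quartic `Q` with
`ω² = 2cX²/(ξ₁² - X²)`. Since `Q(0), Q(-1) < 0` and `Q` is positive far out on both sides, `Q` has
a real root in `(0, ∞)` and one in `(-∞, -1)`, leaving at most two roots in the strip, each of
which accounts for at most two values of `ω`.
-/

/-- `c = a/(1+a²)`. -/
noncomputable def cOf (a : ℝ) : ℝ := a / (1 + a ^ 2)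

/-- The branch of the logarithm with argument in `(-π/2, 3π/2]`:
`L(z) = Log(-iz) + iπ/2` where `Log` is the principal branch. -/
noncomputable def Lbr (z : ℂ) : ℂ :=
  Complex.log (-Complex.I * z) + Complex.I * ((Real.pi : ℂ) / 2)

/-- The branch `√(ω² + 2c) = exp((1/2)L(ω + i√(2c)) + (1/2)L(ω - i√(2c)))`. -/
noncomputable def sqBr (a : ℝ) (ω : ℂ) : ℂ :=
  Complex.exp ((1 / 2 : ℂ) * Lbr (ω + Complex.I * (Real.sqrt (2 * cOf a) : ℂ)) +
    (1 / 2 : ℂ) * Lbr (ω - Complex.I * (Real.sqrt (2 * cOf a) : ℂ)))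

/-- `G(ω) = (ω - √(ω² + 2c))/√(2c)`. -/
noncomputable def Gbr (a : ℝ) (ω : ℂ) : ℂ :=
  (ω - sqBr a ω) / (Real.sqrt (2 * cOf a) : ℂ)

/-- The branch cuts `𝒞 = i·((-∞, -1/√(2c)] ∪ [-√(2c), √(2c)] ∪ [1/√(2c), ∞))`. -/
def cuts (a : ℝ) : Set ℂ :=
  {z : ℂ | ∃ t : ℝ, z = Complex.I * (t : ℂ) ∧
    (t ≤ -(1 / Real.sqrt (2 * cOf a)) ∨
      (-Real.sqrt (2 * cOf a) ≤ t ∧ t ≤ Real.sqrt (2 * cOf a)) ∨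
      1 / Real.sqrt (2 * cOf a) ≤ t)}

/-- The branch of the logarithm with argument in `(0, 2π]`: `L₃(z) = Log(-z) + iπ`. -/
noncomputable def L3 (z : ℂ) : ℂ := Complex.log (-z) + Complex.I * (Real.pi : ℂ)

/-- The saddle point function `g_ξ(ω) = L(ω) - ξ·L(G(ω)) + ξ·L₃(G(1/ω))`. -/
noncomputable def gxi (a ξ : ℝ) (ω : ℂ) : ℂ :=
  Lbr ω - (ξ : ℂ) * Lbr (Gbr a ω) + (ξ : ℂ) * L3 (Gbr a ω⁻¹)

/-- The saddle point equation `1 + ξ₁·ω/√(ω²+2c) + ξ₂/(ω·√(ω⁻²+2c)) = 0`. -/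
def saddleEq (a ξ₁ ξ₂ : ℝ) (ω : ℂ) : Prop :=
  1 + (ξ₁ : ℂ) * ω / sqBr a ω + (ξ₂ : ℂ) / (ω * sqBr a ω⁻¹) = 0

open Complex Polynomial ComplexConjugate
open scoped Real

lemma abs_arg_sub_arg_lt_pi {z w : ℂ} (him : z.im = w.im) (h : z.im ≠ 0 ∨ 0 < z.re * w.re) :
    |arg z - arg w| < π := by
  have hz := neg_pi_lt_arg z
  have hw := neg_pi_lt_arg w
  rw [abs_lt]
  rcases lt_trichotomy z.im 0 with hneg | hzero | hpos
  · have := arg_neg_iff.mpr hneg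
    have := arg_neg_iff.mpr (him ▸ hneg)
    constructor <;> linarith
  · obtain ⟨hzr, hwr⟩ | ⟨hzr, hwr⟩ :=
      pos_and_pos_or_neg_and_neg_of_mul_pos (h.resolve_left (not_not.mpr hzero))
    · have := arg_lt_pi_iff.mpr (Or.inl hzr.le)
      have := arg_lt_pi_iff.mpr (Or.inl hwr.le)
      have := arg_nonneg_iff.mpr hzero.ge
      have := arg_nonneg_iff.mpr (him ▸ hzero.ge)
      constructor <;> linarith
    · rw [arg_eq_pi_iff.mpr ⟨hzr, hzero⟩, arg_eq_pi_iff.mpr ⟨hwr, him ▸ hzero⟩]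
      constructor <;> linarith [Real.pi_pos]
  · have := arg_lt_pi_iff.mpr (Or.inr hpos.ne')
    have := arg_lt_pi_iff.mpr (Or.inr (him ▸ hpos.ne'))
    have := arg_nonneg_iff.mpr hpos.le
    have := arg_nonneg_iff.mpr (him ▸ hpos.le)
    constructor <;> linarith

lemma re_exp_half_log_mul_conj_pos {z w : ℂ} (him : z.im = w.im)
    (h : z.im ≠ 0 ∨ 0 < z.re * w.re) : 0 < (exp (log z / 2) * conj (exp (log w / 2))).re := by
  rw [← exp_conj, ← exp_add, exp_re]
  refine mul_pos (Real.exp_pos _) (Real.cos_pos_of_mem_Ioo ?_)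
  have := abs_lt.mp (abs_arg_sub_arg_lt_pi him h)
  simp only [add_im, conj_im, div_ofNat_im, log_im]
  constructor <;> linarith

lemma re_sq_add_sq_mul_conj_mul (p q : ℂ) :
    ((p ^ 2 + q ^ 2) * conj (p * q)).re = (normSq p + normSq q) * (p * conj q).re := by
  simp only [sq, mul_re, mul_im, conj_re, conj_im, add_re, add_im, normSq_apply]
  ring

lemma re_add_mul_conj_sqrt_mul_sqrt_pos {z w : ℂ} (him : z.im = w.im)
    (h : z.im ≠ 0 ∨ 0 < z.re * w.re) :
    0 < ((z + w) * conj (exp (log z / 2) * exp (log w / 2))).re := by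
  have hz : z ≠ 0 := by rintro rfl; simp at h
  have hw : w ≠ 0 := by rintro rfl; simp [him] at h
  have hsq : ∀ {u : ℂ}, u ≠ 0 → exp (log u / 2) ^ 2 = u := fun hu => by
    rw [sq, ← exp_add, add_halves, exp_log hu]
  have := re_sq_add_sq_mul_conj_mul (exp (log z / 2)) (exp (log w / 2))
  rw [hsq hz, hsq hw] at this
  rw [this]
  exact mul_pos (add_pos (normSq_pos.mpr (exp_ne_zero _)) (normSq_pos.mpr (exp_ne_zero _)))
    (re_exp_half_log_mul_conj_pos him h)

lemma re_div_pos_of_re_mul_conj_pos {z w : ℂ} (h : 0 < (z * conj w).re) : 0 < (z / w).re := by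
  have hw : w ≠ 0 := by rintro rfl; simp at h
  rw [div_eq_mul_inv, inv_def, ← mul_assoc, re_mul_ofReal]
  exact mul_pos h (inv_pos.mpr (normSq_pos.mpr hw))

lemma card_nthRootsFinset_le {R : Type*} [CommRing R] [IsDomain R] (n : ℕ) (a : R) :
    (nthRootsFinset n a).card ≤ n := by
  classical
  rw [nthRootsFinset_def]
  exact (Multiset.toFinset_card_le _).trans (card_nthRoots n a)

lemma card_filter_aroots_le {p : ℝ[X]} {n : ℕ} (hp : p.natDegree ≤ n + 2) (P : ℂ → Prop)
    [DecidablePred P] {u v : ℝ} (huv : u ≠ v) (hu : p.IsRoot u) (hv : p.IsRoot v)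
    (hPu : ¬P u) (hPv : ¬P v) : ((p.aroots ℂ).toFinset.filter P).card ≤ n := by
  classical
  rcases eq_or_ne p 0 with rfl | hp0
  · simp
  set R := (p.aroots ℂ).toFinset
  have hmem : ∀ {x : ℝ}, p.IsRoot x → (x : ℂ) ∈ R := fun {x} hx =>
    Multiset.mem_toFinset.mpr <| mem_aroots.mpr ⟨hp0,
      (aeval_algebraMap_apply_eq_algebraMap_eval (A := ℂ) x p).trans (by rw [hx.eq_zero, map_zero])⟩
  have hsub : R.filter P ⊆ R \ {(u : ℂ), (v : ℂ)} := by
    intro z hz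
    obtain ⟨hzR, hzP⟩ := Finset.mem_filter.mp hz
    refine Finset.mem_sdiff.mpr ⟨hzR, ?_⟩
    simp only [Finset.mem_insert, Finset.mem_singleton]
    rintro (rfl | rfl) <;> contradiction
  have hR : R.card ≤ n + 2 :=
    (Multiset.toFinset_card_le _).trans ((card_roots' _).trans (natDegree_map_le.trans hp))
  calc (R.filter P).card ≤ (R \ {(u : ℂ), (v : ℂ)}).card := Finset.card_le_card hsub
    _ = R.card - 2 := by
      rw [Finset.card_sdiff_of_subset (Finset.insert_subset (hmem hu) (by simpa using hmem hv)),
        Finset.card_pair (by exact_mod_cast huv)]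
    _ ≤ n := by omega

lemma cOf_pos {a : ℝ} (ha : 0 < a) : 0 < cOf a := by
  unfold cOf; positivity

lemma cOf_lt_half {a : ℝ} (ha : a ≠ 1) : cOf a < 1 / 2 := by
  rw [cOf, div_lt_iff₀ (by positivity)]
  nlinarith [sq_pos_of_ne_zero (sub_ne_zero.mpr ha)]

lemma exp_Lbr {z : ℂ} (hz : z ≠ 0) : exp (Lbr z) = z := by
  rw [Lbr, exp_add, exp_log (by simp [hz]), show I * (π / 2 : ℂ) = π / 2 * I by ring,
    exp_pi_div_two_mul_I]
  linear_combination (-z) * I_sq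

lemma sqBr_sq {a : ℝ} (ha : 0 ≤ cOf a) {ω : ℂ}
    (hω : ω.re ≠ 0 ∨ Real.sqrt (2 * cOf a) ^ 2 < ω.im ^ 2) :
    sqBr a ω ^ 2 = ω ^ 2 + 2 * cOf a := by
  set r := Real.sqrt (2 * cOf a)
  have hr : (r : ℂ) ^ 2 = 2 * cOf a := by
    rw [← ofReal_pow, Real.sq_sqrt (by linarith)]; push_cast; ring
  have hne : ∀ ε : ℝ, ε ^ 2 = r ^ 2 → ω + I * ε ≠ 0 := by
    intro ε hε h0
    rw [eq_neg_of_add_eq_zero_left h0] at hω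
    simp [hε] at hω
  rw [sqBr, sq, ← exp_add, show ∀ u v : ℂ, 1 / 2 * u + 1 / 2 * v + (1 / 2 * u + 1 / 2 * v) = u + v
    from fun u v => by ring, exp_add, exp_Lbr (hne r rfl), sub_eq_add_neg, ← mul_neg, ← ofReal_neg,
    exp_Lbr (hne (-r) (neg_sq r))]
  push_cast
  linear_combination hr - (r : ℂ) ^ 2 * I_sq

lemma re_div_sqBr_pos (a : ℝ) {ω : ℂ}
    (hω : ω.re ≠ 0 ∨ Real.sqrt (2 * cOf a) ^ 2 < ω.im ^ 2) : 0 < (ω / sqBr a ω).re := by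
  set r := Real.sqrt (2 * cOf a)
  set z := -I * ω + r
  set w := -I * ω - r
  have hsqBr : sqBr a ω = I * (exp (log z / 2) * exp (log w / 2)) := by
    have hz : -I * (ω + I * r) = z := by linear_combination (-r : ℂ) * I_sq
    have hw : -I * (ω - I * r) = w := by linear_combination (r : ℂ) * I_sq
    rw [sqBr, Lbr, Lbr, hz, hw,
      show ∀ u v : ℂ, 1 / 2 * (u + I * (π / 2)) + 1 / 2 * (v + I * (π / 2))
        = π / 2 * I + (u / 2 + v / 2) from fun u v => by ring,
      exp_add, exp_add, exp_pi_div_two_mul_I]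
  have hzw : z.im ≠ 0 ∨ 0 < z.re * w.re := by
    simp only [z, w, add_re, sub_re, add_im, mul_re, mul_im, neg_re, neg_im, I_re, I_im,
      ofReal_re, ofReal_im]
    rcases hω with h | h
    · left; simpa using h
    · right; nlinarith
  apply re_div_pos_of_re_mul_conj_pos
  have := re_add_mul_conj_sqrt_mul_sqrt_pos (show z.im = w.im by simp [z, w]) hzw
  rw [hsqBr, map_mul, conj_I]
  have hsum : z + w = ((2 : ℝ) : ℂ) * (ω * -I) := by simp only [z, w]; push_cast; ring
  rw [hsum, mul_assoc, re_ofReal_mul] at this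
  simpa only [mul_assoc] using pos_of_mul_pos_right this zero_le_two

lemma re_ne_zero_or_sq_lt_of_notMem_cuts {a : ℝ} (ha : 0 < cOf a) {ω : ℂ} (hω : ω ∉ cuts a) :
    (ω.re ≠ 0 ∨ Real.sqrt (2 * cOf a) ^ 2 < ω.im ^ 2) ∧
      (ω⁻¹.re ≠ 0 ∨ Real.sqrt (2 * cOf a) ^ 2 < ω⁻¹.im ^ 2) := by
  set r := Real.sqrt (2 * cOf a)
  have hr : 0 < r := Real.sqrt_pos.mpr (by linarith)
  by_cases hre : ω.re = 0
  swap
  · have hω0 : ω ≠ 0 := by rintro rfl; exact hre rfl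
    exact ⟨Or.inl hre, Or.inl (by rw [inv_re]; exact div_ne_zero hre (normSq_pos.mpr hω0).ne')⟩
  set y := ω.im
  have hωy : ω = I * y := by apply Complex.ext <;> simp [hre, y]
  have hy : ¬ (y ≤ -(1 / r) ∨ (-r ≤ y ∧ y ≤ r) ∨ 1 / r ≤ y) := fun hy => hω ⟨y, hωy, hy⟩
  push Not at hy
  obtain ⟨hy₁, hy₂, hy₃⟩ := hy
  have hry : r ^ 2 < y ^ 2 := by
    by_cases h : -r ≤ y
    · nlinarith [hy₂ h]
    · nlinarith
  have hy0 : y ≠ 0 := by rintro h; rw [h] at hry; nlinarith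
  have hry' : r ^ 2 * y ^ 2 < 1 := by
    have h₁ : -1 < r * y := by rwa [← div_lt_iff₀' hr, neg_div]
    have h₂ : r * y < 1 := by rwa [← lt_div_iff₀' hr]
    nlinarith
  refine ⟨Or.inr hry, Or.inr ?_⟩
  have him : ω⁻¹.im ^ 2 = 1 / y ^ 2 := by
    rw [hωy, inv_im]
    simp only [mul_im, I_re, ofReal_im, mul_zero, I_im, ofReal_re, one_mul, zero_add, normSq_apply,
      mul_re, zero_mul, sub_self, one_div]
    field_simp
  rw [him, lt_div_iff₀ (by positivity)]
  exact hry'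

noncomputable def saddleQuartic (c p q : ℝ) : ℝ[X] :=
  (X ^ 2 - C (p ^ 2)) * ((1 + X) ^ 2 - C (q ^ 2)) - C (4 * c ^ 2) * X ^ 2 * (1 + X) ^ 2

lemma natDegree_saddleQuartic_le (c p q : ℝ) : (saddleQuartic c p q).natDegree ≤ 4 := by
  unfold saddleQuartic; compute_degree

lemma eval_saddleQuartic (c p q x : ℝ) : (saddleQuartic c p q).eval x =
    (x ^ 2 - p ^ 2) * ((1 + x) ^ 2 - q ^ 2) - 4 * c ^ 2 * x ^ 2 * (1 + x) ^ 2 := by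
  simp [saddleQuartic]

lemma aeval_saddleQuartic (c p q : ℝ) (z : ℂ) : aeval z (saddleQuartic c p q) =
    (z ^ 2 - p ^ 2) * ((1 + z) ^ 2 - q ^ 2) - 4 * c ^ 2 * z ^ 2 * (1 + z) ^ 2 := by
  simp [saddleQuartic]

lemma eval_neg_one_sub_saddleQuartic (c p q x : ℝ) :
    (saddleQuartic c p q).eval (-1 - x) = (saddleQuartic c q p).eval x := by
  simp only [eval_saddleQuartic]; ring

lemma eval_saddleQuartic_pos {c p q : ℝ} (hc : 4 * c ^ 2 < 1) (hp : p ^ 2 < 1) (hq : q ^ 2 < 1) :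
    0 < (saddleQuartic c p q).eval (2 / (1 - 4 * c ^ 2)) := by
  set k := 4 * c ^ 2
  set M := 2 / (1 - k)
  have hkM : (1 - k) * M = 2 := mul_div_cancel₀ _ (by linarith)
  have hM : 2 ≤ M := by rw [le_div_iff₀ (by linarith)]; nlinarith [sq_nonneg c]
  have hlt : (M ^ 2 - 1) * ((1 + M) ^ 2 - 1) < (M ^ 2 - p ^ 2) * ((1 + M) ^ 2 - q ^ 2) :=
    mul_lt_mul'' (by linarith) (by linarith) (by nlinarith) (by nlinarith)
  have hid : (M ^ 2 - 1) * ((1 + M) ^ 2 - 1) - k * M ^ 2 * (1 + M) ^ 2 =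
      (1 - k) * M ^ 3 * (M + 1) := by
    linear_combination M * (M + 1) * hkM
  rw [eval_saddleQuartic]
  have : 0 < (1 - k) * M ^ 3 * (M + 1) := by
    have : 0 < 1 - k := by linarith
    positivity
  linarith

lemma saddleQuartic_ne_zero {c p q : ℝ} (hc : 4 * c ^ 2 < 1) (hp : p ^ 2 < 1) (hq : q ^ 2 < 1) :
    saddleQuartic c p q ≠ 0 := fun h => (eval_saddleQuartic_pos hc hp hq).ne' (by rw [h, eval_zero])

lemma exists_pos_isRoot_saddleQuartic {c p q : ℝ} (hc : 4 * c ^ 2 < 1) (hp : p ^ 2 < 1)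
    (hq : q ^ 2 < 1) (hp0 : p ≠ 0) : ∃ x, 0 < x ∧ (saddleQuartic c p q).IsRoot x := by
  have h0 : (saddleQuartic c p q).eval 0 < 0 := by
    rw [eval_saddleQuartic]; nlinarith [sq_pos_of_ne_zero hp0]
  have hM := eval_saddleQuartic_pos hc hp hq
  have hM0 : (0 : ℝ) ≤ 2 / (1 - 4 * c ^ 2) := div_nonneg zero_le_two (by linarith)
  obtain ⟨x, hx, hx0⟩ := intermediate_value_Ioo hM0 (saddleQuartic c p q).continuousOn
    ⟨h0, hM⟩
  exact ⟨x, hx.1, hx0⟩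

lemma saddleQuartic_elimination {c ξ₁ ξ₂ : ℝ} {ω s t z : ℂ} (hω : ω ≠ 0)
    (hs : s ^ 2 = ω ^ 2 + 2 * c) (ht : t ^ 2 = ω⁻¹ ^ 2 + 2 * c)
    (hz : z * s = ξ₁ * ω) (hz' : (1 + z) * (ω * t) = -ξ₂) :
    ω ^ 2 * (ξ₁ ^ 2 - z ^ 2) = 2 * c * z ^ 2 ∧ aeval z (saddleQuartic c ξ₁ ξ₂) = 0 := by
  have hωt : (ω * t) ^ 2 = 1 + 2 * c * ω ^ 2 := by
    rw [mul_pow, ht]; field_simp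
  have e₁ : ω ^ 2 * (ξ₁ ^ 2 - z ^ 2) = 2 * c * z ^ 2 := by
    linear_combination -(z * s + ξ₁ * ω) * hz + z ^ 2 * hs
  have e₂ : (1 + z) ^ 2 * (1 + 2 * c * ω ^ 2) = ξ₂ ^ 2 := by
    linear_combination ((1 + z) * (ω * t) - ξ₂) * hz' - (1 + z) ^ 2 * hωt
  refine ⟨e₁, ?_⟩
  rw [aeval_saddleQuartic]
  linear_combination (z ^ 2 - ξ₁ ^ 2) * e₂ + 2 * c * (1 + z) ^ 2 * e₁

lemma exists_root_of_saddleEq {a ξ₁ ξ₂ : ℝ} (ha : 0 < cOf a) (hξ₁ : ξ₁ < 0) (hξ₂ : ξ₂ < 0)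
    {ω : ℂ} (hω : ω ∉ cuts a) (h : saddleEq a ξ₁ ξ₂ ω) :
    ∃ z : ℂ, (-1 < z.re ∧ z.re < 0) ∧ aeval z (saddleQuartic (cOf a) ξ₁ ξ₂) = 0 ∧
      ω ^ 2 = 2 * cOf a * z ^ 2 / (ξ₁ ^ 2 - z ^ 2) := by
  obtain ⟨hω₁, hω₂⟩ := re_ne_zero_or_sq_lt_of_notMem_cuts ha hω
  have hω0 : ω ≠ 0 := by
    rintro rfl
    exact hω ⟨0, by simp, Or.inr (Or.inl ⟨by simp [Real.sqrt_nonneg], by simp [Real.sqrt_nonneg]⟩)⟩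
  set s := sqBr a ω
  set t := sqBr a ω⁻¹
  set z := (ξ₁ : ℂ) * ω / s
  have hωt : ω * t ≠ 0 := mul_ne_zero hω0 (exp_ne_zero _)
  have hzre : z.re < 0 := by
    rw [show z = ξ₁ * (ω / s) from mul_div_assoc _ _ _, re_ofReal_mul]
    exact mul_neg_of_neg_of_pos hξ₁ (re_div_sqBr_pos a hω₁)
  have hyre : ((ξ₂ : ℂ) / (ω * t)).re < 0 := by
    rw [div_eq_mul_inv, mul_inv, ← div_eq_mul_inv ω⁻¹, re_ofReal_mul]
    exact mul_neg_of_neg_of_pos hξ₂ (re_div_sqBr_pos a hω₂)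
  have hsum : 1 + z.re + ((ξ₂ : ℂ) / (ω * t)).re = 0 := by
    simpa using congrArg re h
  obtain ⟨e₁, hQ⟩ := saddleQuartic_elimination (c := cOf a) (ξ₁ := ξ₁) (ξ₂ := ξ₂) hω0
    (sqBr_sq ha.le hω₁) (sqBr_sq ha.le hω₂) (div_mul_cancel₀ _ (exp_ne_zero _))
    (by rw [add_eq_zero_iff_eq_neg.mp h, neg_mul, div_mul_cancel₀ _ hωt])
  have hz0 : z ≠ 0 := fun h0 => by simp [h0] at hzre
  have hne : (ξ₁ : ℂ) ^ 2 - z ^ 2 ≠ 0 := by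
    intro h0
    have := mul_ne_zero (mul_ne_zero two_ne_zero (ofReal_ne_zero.mpr ha.ne')) (pow_ne_zero 2 hz0)
    rw [← e₁, h0, mul_zero] at this
    exact this rfl
  exact ⟨z, ⟨by linarith, hzre⟩, hQ, by rw [eq_div_iff hne, e₁]⟩

/-- For all `ξ₁, ξ₂ ∈ (-1, 0)`, the set of `ω ∈ ℂ ∖ 𝒞` satisfying the
saddle point equation `1 + ξ₁·ω/√(ω²+2c) + ξ₂/(ω·√(ω⁻²+2c)) = 0` has at most four
elements. -/
theorem statement5 (a : ℝ) (ha0 : 0 < a) (ha1 : a < 1) (ξ₁ ξ₂ : ℝ)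
    (hξ₁ : -1 < ξ₁) (hξ₁' : ξ₁ < 0) (hξ₂ : -1 < ξ₂) (hξ₂' : ξ₂ < 0) :
    ∃ S : Finset ℂ, S.card ≤ 4 ∧
      {ω : ℂ | ω ∉ cuts a ∧ saddleEq a ξ₁ ξ₂ ω} ⊆ ↑S := by
  classical
  have hc : 0 < cOf a := cOf_pos ha0
  have hc' : 4 * cOf a ^ 2 < 1 := by nlinarith [cOf_lt_half ha1.ne]
  have hξ₁sq : ξ₁ ^ 2 < 1 := by nlinarith
  have hξ₂sq : ξ₂ ^ 2 < 1 := by nlinarith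
  obtain ⟨u, hu, hQu⟩ := exists_pos_isRoot_saddleQuartic hc' hξ₁sq hξ₂sq hξ₁'.ne
  obtain ⟨v, hv, hQv⟩ := exists_pos_isRoot_saddleQuartic hc' hξ₂sq hξ₁sq hξ₂'.ne
  set roots := ((saddleQuartic (cOf a) ξ₁ ξ₂).aroots ℂ).toFinset.filter
    fun z : ℂ => -1 < z.re ∧ z.re < 0
  have hroots : roots.card ≤ 2 :=
    card_filter_aroots_le (natDegree_saddleQuartic_le _ _ _) _ (by linarith : u ≠ -1 - v) hQu
      (by rwa [IsRoot, eval_neg_one_sub_saddleQuartic])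
      (by simp only [ofReal_re]; intro h; linarith [h.2])
      (by simp only [ofReal_re]; intro h; linarith [h.1])
  refine ⟨roots.biUnion fun z => nthRootsFinset 2 (2 * cOf a * z ^ 2 / (ξ₁ ^ 2 - z ^ 2)), ?_, ?_⟩
  · exact (Finset.card_biUnion_le_card_mul _ _ 2 fun z _ => card_nthRootsFinset_le 2 _).trans
      (by omega)
  · rintro ω ⟨hωC, hωS⟩
    obtain ⟨z, hz, hQz, hωz⟩ := exists_root_of_saddleEq hc hξ₁' hξ₂' hωC hωS
    simp only [Finset.coe_biUnion, Set.mem_iUnion, Finset.mem_coe, mem_nthRootsFinset two_pos]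
    exact ⟨z, Finset.mem_filter.mpr ⟨Multiset.mem_toFinset.mpr
      (mem_aroots.mpr ⟨saddleQuartic_ne_zero hc' hξ₁sq hξ₂sq, hQz⟩), hz⟩, hωz⟩
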